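/- arXiv:1906.06366 — 3 statements merged into one kernel-verified Lean document; each statement's English description precedes it below -/
import Mathlib

section
/- If A is the adjacency matrix of a strongly connected directed graph on T vertices (i.e., A is irreducible and nonnegative), and each C^(t) is a nonnegative N×N matrix such that the sum of all C^(t) over t is irreducible, then for any ω > 0 the supracentrality matrix C(ω) = diag[C^(1),…,C^(T)] + ω (A ⊗ I_N) is an irreducible nonnegative NT×NT matrix. -/
open Matrix

/-- A nonnegative square matrix is irreducible if for every pair of indices `i, j`
there is a power of the matrix whose `(i,j)` entry is positive. -/
def IsIrreducibleMat {n : Type*} [Fintype n] [DecidableEq n] (M : Matrix n n ℝ) : Prop :=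
  ∀ i j, ∃ k : ℕ, 0 < (M ^ k) i j

/-- The supracentrality matrix `C(ω) = diag[C^(1),…,C^(T)] + ω (Ã ⊗ I_N)`,
indexed by node-layer pairs `(t, i)`. -/
def supraMat {N T : ℕ} (C : Fin T → Matrix (Fin N) (Fin N) ℝ)
    (Atil : Matrix (Fin T) (Fin T) ℝ) (ω : ℝ) :
    Matrix (Fin T × Fin N) (Fin T × Fin N) ℝ :=
  Matrix.of fun p q =>
    (if p.1 = q.1 then C p.1 p.2 q.2 else 0) +
      ω * Atil p.1 q.1 * (if p.2 = q.2 then 1 else 0)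

lemma pow_entry_nonneg {n : Type*} [Fintype n] [DecidableEq n] {M : Matrix n n ℝ}
    (h : ∀ i j, 0 ≤ M i j) : ∀ (k : ℕ) i j, 0 ≤ (M ^ k) i j := by
  intro k
  induction k with
  | zero => intro i j; simp [Matrix.one_apply]; split <;> norm_num
  | succ k ih =>
      intro i j
      rw [pow_succ, Matrix.mul_apply]
      exact Finset.sum_nonneg fun s _ => mul_nonneg (ih i s) (h s j)

lemma reach_trans {n : Type*} [Fintype n] [DecidableEq n] {M : Matrix n n ℝ}
    (hM : ∀ i j, 0 ≤ M i j) {p q r : n} {k l : ℕ}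
    (h1 : 0 < (M ^ k) p q) (h2 : 0 < (M ^ l) q r) : 0 < (M ^ (k + l)) p r := by
  rw [pow_add, Matrix.mul_apply]
  have hle : (M ^ k) p q * (M ^ l) q r ≤ ∑ s, (M ^ k) p s * (M ^ l) s r :=
    Finset.single_le_sum
      (fun s _ => mul_nonneg (pow_entry_nonneg hM k p s) (pow_entry_nonneg hM l s r))
      (Finset.mem_univ q)
  exact lt_of_lt_of_le (mul_pos h1 h2) hle

lemma mul_pos_parts {a b : ℝ} (ha : 0 ≤ a) (hb : 0 ≤ b) (h : 0 < a * b) :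
    0 < a ∧ 0 < b :=
  ⟨lt_of_le_of_ne ha (by rintro rfl; simp at h),
   lt_of_le_of_ne hb (by rintro rfl; simp at h)⟩

lemma exists_pos_of_sum_pos {α : Type*} (s : Finset α) (f : α → ℝ)
    (h : 0 < ∑ x ∈ s, f x) : ∃ x ∈ s, 0 < f x := by
  by_contra hc
  push_neg at hc
  exact absurd h (not_lt.2 (Finset.sum_nonpos hc))

/-- If `Ã` is nonnegative and irreducible (adjacency matrix of a strongly connected
directed graph on `T` vertices), each `C^(t)` is nonnegative, and `∑_t C^(t)` is
irreducible, then for any `ω > 0` the supracentrality matrix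
`C(ω) = diag[C^(1),…,C^(T)] + ω (Ã ⊗ I_N)` is nonnegative and irreducible. -/
theorem supracentrality_irreducible {N T : ℕ}
    (C : Fin T → Matrix (Fin N) (Fin N) ℝ)
    (Atil : Matrix (Fin T) (Fin T) ℝ)
    (hA_nn : ∀ t t', 0 ≤ Atil t t')
    (hA_irr : IsIrreducibleMat Atil)
    (hC_nn : ∀ t i j, 0 ≤ C t i j)
    (hC_sum_irr : IsIrreducibleMat (∑ t, C t))
    (ω : ℝ) (hω : 0 < ω) :
    (∀ p q, 0 ≤ supraMat C Atil ω p q) ∧ IsIrreducibleMat (supraMat C Atil ω) := by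
  set M := supraMat C Atil ω with hM
  have hMent : ∀ p q, M p q =
      (if p.1 = q.1 then C p.1 p.2 q.2 else 0) +
        ω * Atil p.1 q.1 * (if p.2 = q.2 then 1 else 0) := by
    intro p q; rfl
  have hM_nn : ∀ p q, 0 ≤ M p q := by
    intro p q
    rw [hMent]
    apply add_nonneg
    · split <;> [exact hC_nn _ _ _; exact le_refl 0]
    · apply mul_nonneg (mul_nonneg hω.le (hA_nn _ _))
      split <;> norm_num
  -- Reach relation
  have hstep : ∀ p q : Fin T × Fin N, 0 < M p q → ∃ k, 0 < (M ^ k) p q := by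
    intro p q h; exact ⟨1, by rwa [pow_one]⟩
  -- layer move: if (Atil^m) t t' > 0 then reach (t,i) → (t',i)
  have hmove : ∀ (m : ℕ) (t t' : Fin T) (i : Fin N),
      0 < (Atil ^ m) t t' → ∃ k, 0 < (M ^ k) (t, i) (t', i) := by
    intro m
    induction m with
    | zero =>
        intro t t' i h
        rw [pow_zero, Matrix.one_apply] at h
        split at h
        · subst ‹t = t'›; exact ⟨0, by simp [Matrix.one_apply]⟩
        · exact absurd h (lt_irrefl 0)
    | succ m ih =>
        intro t t' i h
        rw [pow_succ, Matrix.mul_apply] at h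
        obtain ⟨s, -, hs⟩ := exists_pos_of_sum_pos _ _ h
        obtain ⟨h1, h2⟩ := mul_pos_parts (pow_entry_nonneg hA_nn m t s) (hA_nn s t') hs
        obtain ⟨k, hk⟩ := ih t s i h1
        have hedge : 0 < M (s, i) (t', i) := by
          rw [hMent]
          have : 0 < ω * Atil s t' * (if (i:Fin N) = i then 1 else 0) := by
            simp; positivity
          have hnn : (0:ℝ) ≤ (if (s:Fin T) = t' then C s i i else 0) := by
            split <;> [exact hC_nn _ _ _; exact le_refl 0]
          linarith
        exact ⟨k + 1, reach_trans hM_nn hk (show 0 < (M ^ 1) (s, i) (t', i) by rwa [pow_one])⟩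
  -- node move
  have hnode : ∀ (k : ℕ) (i j : Fin N), 0 < ((∑ t, C t) ^ k) i j →
      ∀ t t' : Fin T, ∃ m, 0 < (M ^ m) (t, i) (t', j) := by
    intro k
    induction k with
    | zero =>
        intro i j h t t'
        rw [pow_zero, Matrix.one_apply] at h
        split at h
        · subst ‹i = j›
          obtain ⟨m, hm⟩ := hA_irr t t'
          exact hmove m t t' i hm
        · exact absurd h (lt_irrefl 0)
    | succ k ih =>
        intro i j h t t'
        have hS_nn : ∀ a b, 0 ≤ (∑ u, C u) a b := by
          intro a b
          rw [Matrix.sum_apply]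
          exact Finset.sum_nonneg fun u _ => hC_nn u a b
        rw [pow_succ, Matrix.mul_apply] at h
        obtain ⟨s, -, hs⟩ := exists_pos_of_sum_pos _ _ h
        obtain ⟨h1, h2⟩ := mul_pos_parts (pow_entry_nonneg hS_nn k i s) (hS_nn s j) hs
        rw [Matrix.sum_apply] at h2
        obtain ⟨u, -, hu⟩ := exists_pos_of_sum_pos _ _ h2
        obtain ⟨m1, hm1⟩ := ih i s h1 t u
        have hedge : 0 < M (u, s) (u, j) := by
          rw [hMent]
          have hnn : (0:ℝ) ≤ ω * Atil u u * (if (s:Fin N) = j then 1 else 0) := by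
            apply mul_nonneg (mul_nonneg hω.le (hA_nn _ _)); split <;> norm_num
          simp only [if_pos rfl, if_true]
          linarith
        obtain ⟨m2, hm2⟩ := hA_irr u t'
        obtain ⟨m3, hm3⟩ := hmove m2 u t' j hm2
        exact ⟨m1 + 1 + m3, reach_trans hM_nn
          (reach_trans hM_nn hm1 (show 0 < (M ^ 1) (u, s) (u, j) by rwa [pow_one])) hm3⟩
  refine ⟨hM_nn, fun p q => ?_⟩
  obtain ⟨k, hk⟩ := hC_sum_irr p.2 q.2
  obtain ⟨m, hm⟩ := hnode k p.2 q.2 hk p.1 q.1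
  exact ⟨m, hm⟩
end

section
/- If C is an N×N column-stochastic matrix with strictly positive entries, then its spectral radius is 1, the eigenvalue 1 is simple, the vector (1/N,…,1/N) (equivalently the all-ones vector) is a left eigenvector for eigenvalue 1, and there is a unique right eigenvector v with strictly positive entries summing to 1 (the PageRank vector). -/
open Matrix

def IsEigC {n : Type*} [Fintype n] (M : Matrix n n ℝ) (μ : ℂ) : Prop :=
  ∃ v : n → ℂ, v ≠ 0 ∧ (M.map Complex.ofReal).mulVec v = μ • v

/-!
Column sums equal to `1` make the all-ones vector a left fixed vector of `C` and make `C`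
preserve the sum of a vector; with the triangle inequality this bounds every eigenvalue by `1`
in the `ℓ¹` norm. If `C v = v` with `v` real, then `|v| ≤ C |v|` with equal sums, so `|v|` and
`|v| - v` are fixed as well. A nonnegative fixed vector of a positive matrix is either `0` or
strictly positive, so `v` has constant sign, and a fixed vector with sum `0` vanishes. Hence
the fixed space is spanned by a single positive vector `p`, over `ℂ` too (take real and imaginary
parts). The eigenvalue `1` is simple because the all-ones vector kills the range of `C - 1` but
not `p`, so `ker (C - 1)² = ker (C - 1)`.
-/

open Finset

namespace Module.End

variable {R V : Type*} [CommRing R] [AddCommGroup V] [Module R V]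

theorem maxGenEigenspace_eq_eigenspace {f : End R V} {μ : R}
    (h : Disjoint (f.eigenspace μ) (LinearMap.range (f - μ • 1))) :
    f.maxGenEigenspace μ = f.eigenspace μ := by
  refine le_antisymm ?_ eigenspace_le_maxGenEigenspace
  have ker_pow_le_ker :
      ∀ (k : ℕ) x, ((f - μ • 1 : End R V) ^ k) x = 0 → (f - μ • 1 : End R V) x = 0 := by
    intro k
    induction k with
    | zero => intro x hx; simp_all
    | succ k ih =>
      intro x hx
      rw [pow_succ, Module.End.mul_apply] at hx
      have hker : (f - μ • 1) x ∈ f.eigenspace μ := by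
        rw [eigenspace_def, LinearMap.mem_ker]
        exact ih _ hx
      exact Submodule.disjoint_def.1 h _ hker (LinearMap.mem_range_self _ x)
  intro x hx
  obtain ⟨k, hk⟩ := (mem_maxGenEigenspace f μ x).1 hx
  rw [eigenspace_def, LinearMap.mem_ker]
  exact ker_pow_le_ker k x hk

end Module.End

namespace Matrix

variable {n : Type*} [Fintype n]

theorem rootMultiplicity_charpoly_eq_one [DecidableEq n] {K : Type*} [Field K]
    {A : Matrix n n K} {μ : K} {u p : n → K} (hu : u ᵥ* A = μ • u) (hp : A *ᵥ p = μ • p)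
    (hker : ∀ x, A *ᵥ x = μ • x → ∃ c : K, x = c • p) (hup : u ⬝ᵥ p ≠ 0) :
    A.charpoly.rootMultiplicity μ = 1 := by
  have hp0 : p ≠ 0 := by rintro rfl; exact hup (dotProduct_zero u)
  have heig : Module.End.eigenspace (toLin' A) μ = K ∙ p := by
    ext x
    rw [Module.End.mem_eigenspace_iff, Submodule.mem_span_singleton, toLin'_apply]
    constructor
    · intro hx
      obtain ⟨c, rfl⟩ := hker x hx
      exact ⟨c, rfl⟩
    · rintro ⟨c, rfl⟩
      rw [mulVec_smul, hp, smul_comm]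
  have hdisj :
      Disjoint (Module.End.eigenspace (toLin' A) μ) (LinearMap.range (toLin' A - μ • 1)) := by
    rw [heig, Submodule.disjoint_def]
    rintro y hy ⟨x, rfl⟩
    obtain ⟨c, hc⟩ := Submodule.mem_span_singleton.1 hy
    have hu_range : u ⬝ᵥ (A *ᵥ x - μ • x) = 0 := by
      rw [dotProduct_sub, dotProduct_mulVec, hu, dotProduct_smul, smul_dotProduct, sub_self]
    have hc0 : c = 0 := by
      simp only [LinearMap.sub_apply, toLin'_apply, LinearMap.smul_apply, Module.End.one_apply]
        at hc
      rw [← hc, dotProduct_smul, smul_eq_mul] at hu_range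
      exact (mul_eq_zero.1 hu_range).resolve_right hup
    rw [← hc, hc0, zero_smul]
  rw [← charpoly_toLin', ← LinearMap.finrank_maxGenEigenspace_eq,
    Module.End.maxGenEigenspace_eq_eigenspace hdisj, heig, finrank_span_singleton hp0]

section Ordered

variable {R : Type*} [Field R] [LinearOrder R] [IsStrictOrderedRing R] {M : Matrix n n R}

theorem abs_mulVec_le_mulVec_abs (hM : ∀ i j, 0 ≤ M i j) (v : n → R) : |M *ᵥ v| ≤ M *ᵥ |v| := by
  intro i
  simp only [Pi.abs_apply, mulVec, dotProduct]
  refine (abs_sum_le_sum_abs _ _).trans (sum_le_sum fun j _ => ?_)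
  rw [abs_mul, abs_of_nonneg (hM i j)]

theorem mulVec_pos_of_nonneg_of_ne_zero (hpos : ∀ i j, 0 < M i j) {v : n → R} (hv0 : 0 ≤ v)
    (hv : v ≠ 0) (i : n) : 0 < (M *ᵥ v) i := by
  obtain ⟨j, hj⟩ := Function.ne_iff.1 hv
  exact sum_pos' (fun k _ => mul_nonneg (hpos i k).le (hv0 k))
    ⟨j, mem_univ j, mul_pos (hpos i j) ((hv0 j).lt_of_ne' hj)⟩

variable [DecidableEq n]

theorem mulVec_abs_eq_abs (hM : M ∈ colStochastic R n) {v : n → R} (hv : M *ᵥ v = v) :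
    M *ᵥ |v| = |v| := by
  have hle : |v| ≤ M *ᵥ |v| := by
    simpa only [hv] using abs_mulVec_le_mulVec_abs (fun i j => hM.1 i j) v
  funext i
  exact ((sum_eq_sum_iff_of_le fun i _ => hle i).1 (sum_mulVec_of_mem_colStochastic hM).symm
    i (mem_univ i)).symm

theorem nonneg_or_nonpos_of_mulVec_eq_self (hM : M ∈ colStochastic R n)
    (hpos : ∀ i j, 0 < M i j) {v : n → R} (hv : M *ᵥ v = v) : 0 ≤ v ∨ v ≤ 0 := by
  have hu : M *ᵥ (|v| - v) = |v| - v := by rw [mulVec_sub, mulVec_abs_eq_abs hM hv, hv]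
  by_cases hu0 : |v| - v = 0
  · exact Or.inl (sub_eq_zero.1 hu0 ▸ abs_nonneg v)
  · refine Or.inr fun i => not_lt.1 fun hvi => ?_
    have := hu ▸ mulVec_pos_of_nonneg_of_ne_zero hpos (sub_nonneg.2 (le_abs_self v)) hu0 i
    simp [abs_of_pos hvi] at this

theorem eq_zero_of_mulVec_eq_self_of_sum_eq_zero (hM : M ∈ colStochastic R n)
    (hpos : ∀ i j, 0 < M i j) {v : n → R} (hv : M *ᵥ v = v) (hsum : ∑ i, v i = 0) : v = 0 := by
  funext i
  rcases nonneg_or_nonpos_of_mulVec_eq_self hM hpos hv with h | h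
  · exact (sum_eq_zero_iff_of_nonneg fun j _ => h j).1 hsum i (mem_univ i)
  · exact (sum_eq_zero_iff_of_nonpos fun j _ => h j).1 hsum i (mem_univ i)

theorem eq_sum_smul_of_mulVec_eq_self (hM : M ∈ colStochastic R n) (hpos : ∀ i j, 0 < M i j)
    {p : n → R} (hp : M *ᵥ p = p) (hp1 : ∑ i, p i = 1) {v : n → R} (hv : M *ᵥ v = v) :
    v = (∑ i, v i) • p := by
  refine sub_eq_zero.1 (eq_zero_of_mulVec_eq_self_of_sum_eq_zero hM hpos ?_ ?_)
  · rw [mulVec_sub, mulVec_smul, hv, hp]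
  · simp [sum_sub_distrib, ← mul_sum, hp1]

theorem exists_pos_mulVec_eq_self [Nonempty n] (hM : M ∈ colStochastic R n)
    (hpos : ∀ i j, 0 < M i j) :
    ∃ p : n → R, (∀ i, 0 < p i) ∧ ∑ i, p i = 1 ∧ M *ᵥ p = p := by
  have hdet : (M - 1).det = 0 :=
    exists_vecMul_eq_zero_iff.1 ⟨1, one_ne_zero, by rw [vecMul_sub, hM.2, vecMul_one, sub_self]⟩
  obtain ⟨v, hv0, hv⟩ := exists_mulVec_eq_zero_iff.2 hdet
  rw [sub_mulVec, one_mulVec, sub_eq_zero] at hv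
  have hw : M *ᵥ |v| = |v| := mulVec_abs_eq_abs hM hv
  have hw_pos : ∀ i, 0 < |v| i := fun i =>
    hw ▸ mulVec_pos_of_nonneg_of_ne_zero hpos (abs_nonneg v) (by simpa using hv0) i
  have hs : 0 < ∑ i, |v| i := sum_pos (fun i _ => hw_pos i) univ_nonempty
  refine ⟨(∑ i, |v| i)⁻¹ • |v|, fun i => mul_pos (inv_pos.2 hs) (hw_pos i), ?_, ?_⟩
  · simp only [Pi.smul_apply, smul_eq_mul, ← mul_sum, inv_mul_cancel₀ hs.ne']
  · rw [mulVec_smul, hw]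

end Ordered

section Complex

variable {M : Matrix n n ℝ}

theorem re_map_ofReal_mulVec (x : n → ℂ) (i : n) :
    ((M.map Complex.ofReal *ᵥ x) i).re = (M *ᵥ fun j => (x j).re) i := by
  simp [mulVec, dotProduct, Complex.re_sum]

theorem im_map_ofReal_mulVec (x : n → ℂ) (i : n) :
    ((M.map Complex.ofReal *ᵥ x) i).im = (M *ᵥ fun j => (x j).im) i := by
  simp [mulVec, dotProduct, Complex.im_sum]

theorem map_ofReal_mulVec_ofReal (v : n → ℝ) :
    M.map Complex.ofReal *ᵥ (fun i => (v i : ℂ)) = fun i => ((M *ᵥ v) i : ℂ) := by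
  funext i
  simp [mulVec, dotProduct]

variable [DecidableEq n]

theorem norm_le_one_of_map_ofReal_mulVec_eq_smul (hM : M ∈ colStochastic ℝ n)
    {μ : ℂ} {v : n → ℂ} (hv0 : v ≠ 0) (hv : M.map Complex.ofReal *ᵥ v = μ • v) : ‖μ‖ ≤ 1 := by
  have hs : 0 < ∑ i, ‖v i‖ := by
    obtain ⟨i, hi⟩ := Function.ne_iff.1 hv0
    exact sum_pos' (fun j _ => norm_nonneg _) ⟨i, mem_univ i, norm_pos_iff.2 hi⟩
  have hle : ∀ i, ‖μ‖ * ‖v i‖ ≤ (M *ᵥ fun j => ‖v j‖) i := fun i => by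
    rw [← norm_mul, ← smul_eq_mul, ← Pi.smul_apply, ← hv]
    refine (norm_sum_le _ _).trans (sum_le_sum fun j _ => ?_)
    dsimp only [map_apply]
    rw [norm_mul, Complex.norm_real, Real.norm_of_nonneg (hM.1 i j)]
  refine le_of_mul_le_mul_right ?_ hs
  calc ‖μ‖ * ∑ i, ‖v i‖ ≤ ∑ i, (M *ᵥ fun j => ‖v j‖) i := by
        rw [mul_sum]; exact sum_le_sum fun i _ => hle i
    _ = 1 * ∑ i, ‖v i‖ := by rw [sum_mulVec_of_mem_colStochastic hM, one_mul]

theorem map_ofReal_eq_sum_smul_of_mulVec_eq_self (hM : M ∈ colStochastic ℝ n)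
    (hpos : ∀ i j, 0 < M i j) {p : n → ℝ} (hp : M *ᵥ p = p) (hp1 : ∑ i, p i = 1)
    {x : n → ℂ} (hx : M.map Complex.ofReal *ᵥ x = x) :
    x = (∑ i, x i) • fun i => (p i : ℂ) := by
  have hre := eq_sum_smul_of_mulVec_eq_self hM hpos hp hp1 (v := fun j => (x j).re)
    (funext fun i => by rw [← re_map_ofReal_mulVec, hx])
  have him := eq_sum_smul_of_mulVec_eq_self hM hpos hp hp1 (v := fun j => (x j).im)
    (funext fun i => by rw [← im_map_ofReal_mulVec, hx])
  funext i
  apply Complex.ext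
  · simpa [Complex.re_sum] using congrFun hre i
  · simpa [Complex.im_sum] using congrFun him i

end Complex

end Matrix

/-- If `C` is an `N × N` column-stochastic matrix with strictly positive entries, then
its spectral radius is `1` (every eigenvalue has modulus at most `1`, and `1` is an
eigenvalue), the eigenvalue `1` is simple, the vector `(1/N,…,1/N)` is a left
eigenvector for eigenvalue `1`, and there is a unique right eigenvector `v` with
strictly positive entries summing to `1` (the PageRank vector). -/
theorem column_stochastic_positive_spectrum {N : ℕ} (hN : 0 < N)
    (C : Matrix (Fin N) (Fin N) ℝ)
    (h_pos : ∀ i j, 0 < C i j)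
    (h_col : ∀ j, ∑ i, C i j = 1) :
    (∀ μ : ℂ, IsEigC C μ → ‖μ‖ ≤ 1) ∧
    IsEigC C 1 ∧
    (C.map Complex.ofReal).charpoly.rootMultiplicity 1 = 1 ∧
    Matrix.vecMul (fun _ : Fin N => (1 : ℝ) / N) C = (fun _ => (1 : ℝ) / N) ∧
    (∃! v : Fin N → ℝ, (∀ i, 0 < v i) ∧ (∑ i, v i = 1) ∧ C.mulVec v = v) := by
  have hC : C ∈ colStochastic ℝ (Fin N) :=
    mem_colStochastic_iff_sum.2 ⟨fun i j => (h_pos i j).le, h_col⟩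
  have : Nonempty (Fin N) := ⟨⟨0, hN⟩⟩
  obtain ⟨p, hp_pos, hp1, hp⟩ := exists_pos_mulVec_eq_self hC h_pos
  set q : Fin N → ℂ := fun i => (p i : ℂ)
  have hq : C.map Complex.ofReal *ᵥ q = q := by rw [map_ofReal_mulVec_ofReal, hp]
  have hq1 : ∑ i, q i = 1 := by simp [q, ← Complex.ofReal_sum, hp1]
  have hCc : (1 : Fin N → ℂ) ᵥ* C.map Complex.ofReal = 1 := by
    funext j
    simp [vecMul, dotProduct, ← Complex.ofReal_sum, h_col]
  refine ⟨fun μ ⟨v, hv0, hv⟩ => norm_le_one_of_map_ofReal_mulVec_eq_smul hC hv0 hv,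
    ⟨q, fun h => by simp [h] at hq1, by rwa [one_smul]⟩,
    rootMultiplicity_charpoly_eq_one (by rw [hCc, one_smul]) (by rw [hq, one_smul])
      (fun x hx => ⟨_, map_ofReal_eq_sum_smul_of_mulVec_eq_self hC h_pos hp hp1
        (by rwa [one_smul] at hx)⟩) (by rw [one_dotProduct, hq1]; exact one_ne_zero),
    ?_, ⟨p, ⟨hp_pos, hp1, hp⟩, fun v ⟨_, hv1, hv⟩ => ?_⟩⟩
  · funext j
    simp only [vecMul, dotProduct, ← mul_sum, h_col, mul_one]
  · simpa [hv1] using eq_sum_smul_of_mulVec_eq_self hC h_pos hp hp1 hv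
end

section
/- Suppose each layer's centrality matrix C^(t) is column-stochastic with strictly positive entries and à is irreducible nonnegative. Then in the weak-coupling limit ω → 0⁺, the 1-norm-normalized dominant right eigenvector of C(ω) converges to Σ_t α_t · (e^(t) ⊗ v^(1,t)), where v^(1,t) is the PageRank vector of layer t (dominant right eigenvector of C^(t), normalized to sum 1) and α is the 1-norm-normalized dominant eigenvector of the T×T matrix X with entries X_{tt'} = Ã_{tt'} · ⟨u^(1,t), v^(1,t')⟩ / ⟨u^(1,t), v^(1,t)⟩, where u^(1,t) is the dominant left eigenvector of C^(t). -/
open Matrix Filter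

/-!
For `ω > 0` the matrix `C(ω)` is nonnegative and irreducible, so Perron–Frobenius (obtained from
the Collatz–Wielandt function) gives a positive eigenvector `V(ω)` of sum `1`; summing the columns
of `C(ω)` shows that its eigenvalue is `1 + ω β(V(ω))`, where `β(x) = ∑_{t,t'} Ã_{tt'} ∑_i x_{t'i}`.
The vectors `V(ω)` lie in the compact standard simplex, so it suffices to identify every cluster
point `w` as `ω → 0⁺`. Passing to the limit in the eigen-equation gives `C^(t) w_t = w_t`, hence
`w_t = c_t v^(1,t)`. Pairing the eigen-equation with `e^(t) ⊗ u^(1,t)` cancels the layer term;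
dividing by `ω` and passing to the limit then shows that `c` is a nonnegative eigenvector of `X`,
so `c = α` by uniqueness of the Perron vector.
-/

section Positivity

variable {n : Type*} [Fintype n] {M : Matrix n n ℝ}

theorem mulVec_pos_of_pos {Q : Matrix n n ℝ} (hQ : ∀ i j, 0 < Q i j) {y : n → ℝ}
    (hy : ∀ i, 0 ≤ y i) (hy0 : y ≠ 0) (i : n) : 0 < (Q *ᵥ y) i := by
  obtain ⟨j, hj⟩ := Function.ne_iff.1 hy0
  exact Finset.sum_pos' (fun l _ => mul_nonneg (hQ i l).le (hy l))
    ⟨j, Finset.mem_univ j, mul_pos (hQ i j) ((hy j).lt_of_ne' hj)⟩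

theorem isEigC_of_mulVec_eq_smul {γ : ℝ} {y : n → ℝ} (hy0 : y ≠ 0) (h : M *ᵥ y = γ • y) :
    IsEigC M γ := by
  refine ⟨fun i => (y i : ℂ), fun h0 => hy0 (funext fun i => by simpa using congrFun h0 i), ?_⟩
  funext i
  have := congrArg Complex.ofReal (congrFun h i)
  simpa [mulVec, dotProduct] using this

/-- The bound on `‖μ‖` comes from the triangle inequality at an index maximizing `‖z i‖ / w i`. -/
theorem norm_le_of_isEigC [Nonempty n] (hM : ∀ i j, 0 ≤ M i j) {w : n → ℝ} (hw : ∀ i, 0 < w i)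
    {r : ℝ} (hMw : M *ᵥ w = r • w) {μ : ℂ} (hμ : IsEigC M μ) : ‖μ‖ ≤ r := by
  obtain ⟨z, hz0, hz⟩ := hμ
  obtain ⟨i, -, hi⟩ := Finset.exists_max_image Finset.univ (fun i => ‖z i‖ / w i)
    Finset.univ_nonempty
  set c := ‖z i‖ / w i
  have hle : ∀ j, ‖z j‖ ≤ c * w j := fun j =>
    (div_le_iff₀ (hw j)).1 (hi j (Finset.mem_univ j))
  have hzi : 0 < ‖z i‖ := by
    obtain ⟨j, hj⟩ := Function.ne_iff.1 hz0
    have := (hle j).trans_lt' (norm_pos_iff.2 hj)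
    rw [← div_mul_cancel₀ ‖z i‖ (hw i).ne']
    exact mul_pos (pos_of_mul_pos_left this (hw j).le) (hw i)
  refine le_of_mul_le_mul_right ?_ hzi
  calc ‖μ‖ * ‖z i‖ = ‖∑ j, (M i j : ℂ) * z j‖ := by
        rw [← norm_mul, ← smul_eq_mul, ← Pi.smul_apply μ z, ← hz]; rfl
    _ ≤ ∑ j, M i j * (c * w j) := by
        refine (norm_sum_le _ _).trans (Finset.sum_le_sum fun j _ => ?_)
        rw [norm_mul, Complex.norm_real, Real.norm_of_nonneg (hM i j)]
        exact mul_le_mul_of_nonneg_left (hle j) (hM i j)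
    _ = r * ‖z i‖ := by
        simp_rw [mul_left_comm _ c, ← Finset.mul_sum]
        have := congrFun hMw i
        simp only [mulVec, dotProduct, Pi.smul_apply, smul_eq_mul] at this
        rw [this, ← div_mul_cancel₀ ‖z i‖ (hw i).ne']
        ring

theorem eigenvalue_le_of_pos_eigenvector [Nonempty n] (hM : ∀ i j, 0 ≤ M i j) {w : n → ℝ}
    (hw : ∀ i, 0 < w i) {r : ℝ} (hMw : M *ᵥ w = r • w) {γ : ℝ} {y : n → ℝ} (hy0 : y ≠ 0)
    (hMy : M *ᵥ y = γ • y) : γ ≤ r := by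
  have := norm_le_of_isEigC hM hw hMw (isEigC_of_mulVec_eq_smul hy0 hMy)
  rw [Complex.norm_real, Real.norm_eq_abs] at this
  exact (le_abs_self γ).trans this

theorem dotProduct_pos_of_pos [Nonempty n] {x y : n → ℝ} (hx : ∀ i, 0 < x i)
    (hy : ∀ i, 0 < y i) : 0 < x ⬝ᵥ y :=
  Finset.sum_pos (fun i _ => mul_pos (hx i) (hy i)) Finset.univ_nonempty

end Positivity

section NonnegMatrix

variable {n : Type*} [Fintype n] [DecidableEq n] {M : Matrix n n ℝ}

theorem pow_succ_apply_pos_iff (hM : ∀ i j, 0 ≤ M i j) (k : ℕ) (i j : n) :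
    0 < (M ^ (k + 1)) i j ↔ ∃ l, 0 < (M ^ k) i l ∧ 0 < M l j := by
  rw [pow_succ, mul_apply,
    Finset.sum_pos_iff_of_nonneg fun l _ => mul_nonneg (pow_apply_nonneg hM k i l) (hM l j)]
  refine exists_congr fun l => ?_
  have := pow_apply_nonneg hM k i l
  constructor
  · rintro ⟨-, h⟩
    exact ⟨pos_of_mul_pos_left h (hM l j), pos_of_mul_pos_right h this⟩
  · rintro ⟨h₁, h₂⟩
    exact ⟨Finset.mem_univ l, mul_pos h₁ h₂⟩

theorem IsIrreducibleMat.of_pos_imp_pos {M' : Matrix n n ℝ} (hirr : IsIrreducibleMat M)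
    (hM : ∀ i j, 0 ≤ M i j) (hM' : ∀ i j, 0 ≤ M' i j) (hpos : ∀ i j, 0 < M i j → 0 < M' i j) :
    IsIrreducibleMat M' := by
  have key : ∀ k i j, 0 < (M ^ k) i j → 0 < (M' ^ k) i j := by
    intro k
    induction k with
    | zero => simp
    | succ k ih =>
      intro i j h
      obtain ⟨l, hil, hlj⟩ := (pow_succ_apply_pos_iff hM k i j).1 h
      exact (pow_succ_apply_pos_iff hM' k i j).2 ⟨l, ih i l hil, hpos l j hlj⟩
  intro i j
  obtain ⟨k, hk⟩ := hirr i j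
  exact ⟨k, key k i j hk⟩

theorem IsIrreducibleMat.exists_sum_pow_pos (hirr : IsIrreducibleMat M) (hM : ∀ i j, 0 ≤ M i j) :
    ∃ K, ∀ i j, 0 < (∑ k ∈ Finset.range K, M ^ k) i j := by
  choose k hk using hirr
  refine ⟨Finset.univ.sup (fun p : n × n => k p.1 p.2) + 1, fun i j => ?_⟩
  rw [Matrix.sum_apply]
  refine Finset.sum_pos' (fun k _ => pow_apply_nonneg hM k i j) ⟨k i j, ?_, hk i j⟩
  exact Finset.mem_range_succ_iff.2 (Finset.le_sup (f := fun p : n × n => k p.1 p.2)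
    (Finset.mem_univ (i, j)))

theorem pow_mulVec_of_mulVec_eq_smul {γ : ℝ} {y : n → ℝ} (h : M *ᵥ y = γ • y) (k : ℕ) :
    (M ^ k) *ᵥ y = γ ^ k • y := by
  induction k with
  | zero => simp
  | succ k ih => rw [pow_succ, ← mulVec_mulVec, h, mulVec_smul, ih, smul_smul, ← pow_succ']

theorem pos_of_nonneg_eigenvector (hM : ∀ i j, 0 ≤ M i j) (hirr : IsIrreducibleMat M)
    {γ : ℝ} {y : n → ℝ} (hy : ∀ i, 0 ≤ y i) (hy0 : y ≠ 0) (hMy : M *ᵥ y = γ • y) (i : n) :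
    0 < y i := by
  obtain ⟨K, hQ⟩ := hirr.exists_sum_pow_pos hM
  have h := mulVec_pos_of_pos hQ hy hy0 i
  rw [sum_mulVec, Finset.sum_apply] at h
  simp only [pow_mulVec_of_mulVec_eq_smul hMy, Pi.smul_apply, smul_eq_mul,
    ← Finset.sum_mul] at h
  exact (hy i).lt_of_ne fun h0 => by simp [← h0] at h

theorem eigenvalue_eq_of_nonneg_eigenvector [Nonempty n] (hM : ∀ i j, 0 ≤ M i j)
    (hirr : IsIrreducibleMat M) {w : n → ℝ} (hw : ∀ i, 0 < w i) {r : ℝ} (hMw : M *ᵥ w = r • w)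
    {γ : ℝ} {y : n → ℝ} (hy : ∀ i, 0 ≤ y i) (hy0 : y ≠ 0) (hMy : M *ᵥ y = γ • y) : γ = r :=
  le_antisymm (eigenvalue_le_of_pos_eigenvector hM hw hMw hy0 hMy)
    (eigenvalue_le_of_pos_eigenvector hM (pos_of_nonneg_eigenvector hM hirr hy hy0 hMy) hMy
      (fun h => (hw (Classical.arbitrary n)).ne' (congrFun h _)) hMw)

/-- Subtracting the largest multiple of `w` that stays below `y` leaves a nonnegative eigenvector
with a zero entry, which must vanish by `pos_of_nonneg_eigenvector`. -/
theorem eq_sum_smul_of_mulVec_eq_smul [Nonempty n] (hM : ∀ i j, 0 ≤ M i j)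
    (hirr : IsIrreducibleMat M) {w : n → ℝ} (hw : ∀ i, 0 < w i) (hw1 : ∑ i, w i = 1) {r : ℝ}
    (hMw : M *ᵥ w = r • w) {y : n → ℝ} (hMy : M *ᵥ y = r • y) :
    y = (∑ i, y i) • w := by
  obtain ⟨i, -, hi⟩ := Finset.exists_min_image Finset.univ (fun i => y i / w i)
    Finset.univ_nonempty
  set c := y i / w i
  have hd : ∀ j, 0 ≤ (y - c • w) j := fun j => by
    simpa [sub_nonneg, ← le_div_iff₀ (hw j)] using hi j (Finset.mem_univ j)
  have hdi : (y - c • w) i = 0 := by simp [c, div_mul_cancel₀ _ (hw i).ne']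
  have hMd : M *ᵥ (y - c • w) = r • (y - c • w) := by
    rw [mulVec_sub, mulVec_smul, hMy, hMw, smul_sub, smul_comm]
  have hyc : y = c • w := by
    by_contra hne
    exact (pos_of_nonneg_eigenvector hM hirr hd (sub_ne_zero.2 hne) hMd i).ne' hdi
  have hc : ∑ i, y i = c := by simp [hyc, ← Finset.mul_sum, hw1]
  rw [hc, ← hyc]

/-- Collatz–Wielandt: `w = Q x` with `Q = ∑_{k<K} M ^ k` positive, where `x` maximizes
`min_i (M Q x)_i / (Q x)_i` over the standard simplex. -/
theorem exists_pos_eigenvector [Nonempty n] (hM : ∀ i j, 0 ≤ M i j) (hirr : IsIrreducibleMat M) :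
    ∃ (r : ℝ) (w : n → ℝ), (∀ i, 0 < w i) ∧ M *ᵥ w = r • w := by
  obtain ⟨K, hQ⟩ := hirr.exists_sum_pow_pos hM
  set Q := ∑ k ∈ Finset.range K, M ^ k
  have hQM : ∀ y, Q *ᵥ (M *ᵥ y) = M *ᵥ (Q *ᵥ y) := fun y => by
    simp only [mulVec_mulVec, Q, Finset.sum_mul, Finset.mul_sum, pow_mul_comm']
  let cw : (n → ℝ) → ℝ := fun y =>
    Finset.univ.inf' Finset.univ_nonempty fun i => (M *ᵥ y) i / y i
  have hpos : ∀ x ∈ stdSimplex ℝ n, ∀ i, 0 < (Q *ᵥ x) i := fun x hx =>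
    mulVec_pos_of_pos hQ hx.1 fun h => by simpa [h] using hx.2
  have hcont : ContinuousOn (fun x => cw (Q *ᵥ x)) (stdSimplex ℝ n) :=
    ContinuousOn.finset_inf'_apply _ fun i _ =>
      ContinuousOn.div (by fun_prop) (by fun_prop) fun x hx => (hpos x hx i).ne'
  obtain ⟨x, hx, hmax⟩ := (isCompact_stdSimplex ℝ n).exists_isMaxOn
    ⟨_, single_mem_stdSimplex ℝ (Classical.arbitrary n)⟩ hcont
  set y := Q *ᵥ x
  have hy : ∀ i, 0 < y i := hpos x hx
  have hle : ∀ i, cw y * y i ≤ (M *ᵥ y) i := fun i =>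
    (le_div_iff₀ (hy i)).1 (Finset.inf'_le _ (Finset.mem_univ i))
  refine ⟨cw y, y, hy, ?_⟩
  by_contra hne
  have hd : ∀ i, 0 ≤ (M *ᵥ y - cw y • y) i := fun i => by simpa using hle i
  have hQy : ∀ i, 0 < (Q *ᵥ y) i := mulVec_pos_of_pos hQ (fun i => (hy i).le)
    fun h => by simpa [h] using hy (Classical.arbitrary n)
  have hlt : ∀ i, cw y * (Q *ᵥ y) i < (M *ᵥ (Q *ᵥ y)) i := fun i => by
    have := mulVec_pos_of_pos hQ hd (sub_ne_zero.2 hne) i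
    rwa [mulVec_sub, mulVec_smul, hQM, Pi.sub_apply, Pi.smul_apply, smul_eq_mul, sub_pos] at this
  set s := ∑ i, y i
  have hs : 0 < s := Finset.sum_pos (fun i _ => hy i) Finset.univ_nonempty
  have hx' : s⁻¹ • y ∈ stdSimplex ℝ n :=
    ⟨fun i => by simpa using mul_nonneg (inv_nonneg.2 hs.le) (hy i).le, by
      simp [← Finset.mul_sum, s, hs.ne']⟩
  have hmax' : cw (Q *ᵥ (s⁻¹ • y)) ≤ cw y := hmax hx'
  refine hmax'.not_gt ((Finset.lt_inf'_iff _).2 fun i _ => ?_)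
  rw [mulVec_smul, mulVec_smul, Pi.smul_apply, Pi.smul_apply, smul_eq_mul, smul_eq_mul,
    mul_div_mul_left _ _ (inv_ne_zero hs.ne'), lt_div_iff₀ (hQy i)]
  exact hlt i

theorem exists_perron_vector [Nonempty n] (hM : ∀ i j, 0 ≤ M i j) (hirr : IsIrreducibleMat M) :
    ∃ (r : ℝ) (w : n → ℝ), (∀ i, 0 < w i) ∧ ∑ i, w i = 1 ∧ M *ᵥ w = r • w ∧
      ∀ μ : ℂ, IsEigC M μ → ‖μ‖ ≤ r := by
  obtain ⟨r, w, hw, hMw⟩ := exists_pos_eigenvector hM hirr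
  have hs : 0 < ∑ i, w i := Finset.sum_pos (fun i _ => hw i) Finset.univ_nonempty
  have hw' : ∀ i, 0 < ((∑ i, w i)⁻¹ • w) i := fun i => by simpa using mul_pos (inv_pos.2 hs) (hw i)
  have hMw' : M *ᵥ ((∑ i, w i)⁻¹ • w) = r • ((∑ i, w i)⁻¹ • w) := by
    rw [mulVec_smul, hMw, smul_comm]
  exact ⟨r, _, hw', by simp [← Finset.mul_sum, hs.ne'], hMw',
    fun μ hμ => norm_le_of_isEigC hM hw' hMw' hμ⟩

end NonnegMatrix

section Supra

variable {N T : ℕ} {C : Fin T → Matrix (Fin N) (Fin N) ℝ} {Atil : Matrix (Fin T) (Fin T) ℝ}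

theorem supraMat_nonneg (hC : ∀ t i j, 0 ≤ C t i j) (hA : ∀ t t', 0 ≤ Atil t t') {ω : ℝ}
    (hω : 0 ≤ ω) (p q : Fin T × Fin N) : 0 ≤ supraMat C Atil ω p q := by
  have := hC p.1 p.2 q.2
  have := hA p.1 q.1
  simp only [supraMat, of_apply]
  split_ifs <;> positivity

theorem supraMat_apply_pos_of_fst_eq (hC : ∀ t i j, 0 < C t i j) (hA : ∀ t t', 0 ≤ Atil t t')
    {ω : ℝ} (hω : 0 ≤ ω) (t : Fin T) (i j : Fin N) : 0 < supraMat C Atil ω (t, i) (t, j) := by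
  have := hC t i j
  have := mul_nonneg hω (hA t t)
  simp only [supraMat, of_apply, if_true]
  split_ifs <;> linarith

theorem supraMat_apply_pos_of_snd_eq (hC : ∀ t i j, 0 ≤ C t i j) {ω : ℝ} (hω : 0 < ω)
    {t t' : Fin T} (h : 0 < Atil t t') (j : Fin N) : 0 < supraMat C Atil ω (t, j) (t', j) := by
  have := hC t j j
  have := mul_pos hω h
  simp only [supraMat, of_apply, if_true, mul_one]
  split_ifs <;> linarith

/-- A path `t = t₀ → ⋯ → t_k = t'` in `Ã` lifts to the path `(t, i) → (t, j) → ⋯ → (t', j)`,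
whose first step is inside layer `t` and whose other steps are interlayer copies of node `j`. -/
theorem isIrreducibleMat_supraMat (hC : ∀ t i j, 0 < C t i j) (hA : ∀ t t', 0 ≤ Atil t t')
    (hA_irr : IsIrreducibleMat Atil) {ω : ℝ} (hω : 0 < ω) :
    IsIrreducibleMat (supraMat C Atil ω) := by
  have hC' : ∀ t i j, 0 ≤ C t i j := fun t i j => (hC t i j).le
  have hS := supraMat_nonneg hC' hA hω.le
  have key : ∀ k t t', 0 < (Atil ^ k) t t' →
      ∀ i j, 0 < (supraMat C Atil ω ^ (k + 1)) (t, i) (t', j) := by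
    intro k
    induction k with
    | zero =>
      intro t t' h i j
      obtain rfl : t = t' := by by_contra hne; simp [one_apply_ne hne] at h
      simpa using supraMat_apply_pos_of_fst_eq hC hA hω.le t i j
    | succ k ih =>
      intro t t' h i j
      obtain ⟨s, hts, hst'⟩ := (pow_succ_apply_pos_iff hA k t t').1 h
      exact (pow_succ_apply_pos_iff hS (k + 1) _ _).2
        ⟨(s, j), ih t s hts i j, supraMat_apply_pos_of_snd_eq hC' hω hst' j⟩
  intro p q
  obtain ⟨k, hk⟩ := hA_irr p.1 q.1
  exact ⟨k + 1, key k p.1 q.1 hk p.2 q.2⟩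

theorem curry_supraMat_mulVec (ω : ℝ) (x : Fin T × Fin N → ℝ) (t : Fin T) :
    Function.curry (supraMat C Atil ω *ᵥ x) t =
      C t *ᵥ Function.curry x t + ω • ∑ t', Atil t t' • Function.curry x t' := by
  funext j
  simp [supraMat, mulVec, dotProduct, Fintype.sum_prod_type, add_mul, Finset.sum_add_distrib,
    ite_mul, Finset.mul_sum, mul_assoc]

theorem dotProduct_curry_supraMat_mulVec {t : Fin T} {u : Fin N → ℝ} (hu : u ᵥ* C t = u)
    (ω : ℝ) (x : Fin T × Fin N → ℝ) :
    u ⬝ᵥ Function.curry (supraMat C Atil ω *ᵥ x) t =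
      u ⬝ᵥ Function.curry x t + ω * ∑ t', Atil t t' * (u ⬝ᵥ Function.curry x t') := by
  rw [curry_supraMat_mulVec, dotProduct_add, dotProduct_mulVec, hu, dotProduct_smul,
    dotProduct_sum]
  simp [dotProduct_smul]

def couplingMass (Atil : Matrix (Fin T) (Fin T) ℝ) (x : Fin T × Fin N → ℝ) : ℝ :=
  ∑ t, ∑ t', Atil t t' * ∑ i, x (t', i)

@[fun_prop]
theorem continuous_couplingMass : Continuous (couplingMass (N := N) Atil) := by
  unfold couplingMass; fun_prop

/-- Summing the columns of `C(ω)`, which add up to `1 + ω ∑_t Ã_{t t'}`. -/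
theorem eigenvalue_eq_one_add_couplingMass (hC_col : ∀ t j, ∑ i, C t i j = 1) {ω lam : ℝ}
    {x : Fin T × Fin N → ℝ} (hx : supraMat C Atil ω *ᵥ x = lam • x) (hx1 : ∑ p, x p = 1) :
    lam = 1 + ω * couplingMass Atil x := by
  have h1 : ∀ t, (1 : Fin N → ℝ) ᵥ* C t = 1 := fun t => funext fun j => by
    simp [vecMul, dotProduct, hC_col]
  have hsum : ∀ y : Fin T × Fin N → ℝ, ∑ t, 1 ⬝ᵥ Function.curry y t = ∑ p, y p := fun y => by
    simp [one_dotProduct, Fintype.sum_prod_type]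
  have hβ : ∑ t, ∑ t', Atil t t' * (1 ⬝ᵥ Function.curry x t') = couplingMass Atil x := by
    simp [couplingMass, one_dotProduct]
  have := Finset.sum_congr rfl fun t (_ : t ∈ Finset.univ) =>
    dotProduct_curry_supraMat_mulVec (Atil := Atil) (h1 t) ω x
  rw [Finset.sum_add_distrib, ← Finset.mul_sum, hβ, hsum, hsum, hx, hx1] at this
  simpa [← Finset.mul_sum, hx1] using this

end Supra

theorem MapClusterPt.prodMk_of_tendsto {α X Y : Type*} [TopologicalSpace X] [TopologicalSpace Y]
    {l : Filter α} {f : α → X} {g : α → Y} {x : X} {y : Y} (hf : Tendsto f l (nhds x))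
    (hg : MapClusterPt y l g) : MapClusterPt (x, y) l fun a => (f a, g a) := by
  rw [((nhds x).basis_sets.prod_nhds (nhds y).basis_sets).mapClusterPt_iff_frequently]
  rintro ⟨s, s'⟩ ⟨hs, hs'⟩
  exact ((mapClusterPt_iff_frequently.1 hg s' hs').and_eventually (hf hs)).mono
    fun a h => ⟨h.2, h.1⟩

@[fun_prop]
theorem continuous_curry_apply {ι κ : Type*} (t : ι) :
    Continuous fun x : ι × κ → ℝ => Function.curry x t :=
  continuous_pi fun i => continuous_apply (t, i)

section WeakCoupling

variable {N T : ℕ} {C : Fin T → Matrix (Fin N) (Fin N) ℝ} {Atil : Matrix (Fin T) (Fin T) ℝ}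
  {u v : Fin T → Fin N → ℝ}

noncomputable def effectiveMat (Atil : Matrix (Fin T) (Fin T) ℝ) (u v : Fin T → Fin N → ℝ) :
    Matrix (Fin T) (Fin T) ℝ :=
  Matrix.of fun t t' => Atil t t' * (u t ⬝ᵥ v t') / (u t ⬝ᵥ v t)

theorem effectiveMat_nonneg [Nonempty (Fin N)] (hA : ∀ t t', 0 ≤ Atil t t')
    (hu : ∀ t i, 0 < u t i) (hv : ∀ t i, 0 < v t i) (t t' : Fin T) :
    0 ≤ effectiveMat Atil u v t t' :=
  div_nonneg (mul_nonneg (hA t t') (dotProduct_pos_of_pos (hu t) (hv t')).le)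
    (dotProduct_pos_of_pos (hu t) (hv t)).le

theorem isIrreducibleMat_effectiveMat [Nonempty (Fin N)] (hA : ∀ t t', 0 ≤ Atil t t')
    (hA_irr : IsIrreducibleMat Atil) (hu : ∀ t i, 0 < u t i) (hv : ∀ t i, 0 < v t i) :
    IsIrreducibleMat (effectiveMat Atil u v) :=
  hA_irr.of_pos_imp_pos hA (effectiveMat_nonneg hA hu hv) fun t t' h =>
    div_pos (mul_pos h (dotProduct_pos_of_pos (hu t) (hv t')))
      (dotProduct_pos_of_pos (hu t) (hv t))

theorem eq_of_limit_equations [Nonempty (Fin T)] [Nonempty (Fin N)]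
    (hC_pos : ∀ t i j, 0 < C t i j) (hA : ∀ t t', 0 ≤ Atil t t')
    (hv_pos : ∀ t i, 0 < v t i) (hv_sum : ∀ t, ∑ i, v t i = 1) (hv_eig : ∀ t, C t *ᵥ v t = v t)
    (hu_pos : ∀ t i, 0 < u t i) (hX_irr : IsIrreducibleMat (effectiveMat Atil u v))
    {r : ℝ} {α : Fin T → ℝ} (hα_pos : ∀ t, 0 < α t) (hα_sum : ∑ t, α t = 1)
    (hXα : effectiveMat Atil u v *ᵥ α = r • α) {w : Fin T × Fin N → ℝ}
    (hw : w ∈ stdSimplex ℝ (Fin T × Fin N))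
    (hlayer : ∀ t, C t *ᵥ Function.curry w t = Function.curry w t)
    (hcoupling : ∀ t, ∑ t', Atil t t' * (u t ⬝ᵥ Function.curry w t') =
      couplingMass Atil w * (u t ⬝ᵥ Function.curry w t)) :
    w = fun p => α p.1 * v p.1 p.2 := by
  have hX := effectiveMat_nonneg hA hu_pos hv_pos
  set c : Fin T → ℝ := fun t => ∑ i, w (t, i)
  have hwc : ∀ t, Function.curry w t = c t • v t := fun t =>
    eq_sum_smul_of_mulVec_eq_smul (fun i j => (hC_pos t i j).le)
      (fun i j => ⟨1, by simpa using hC_pos t i j⟩) (hv_pos t) (hv_sum t)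
      (by rw [hv_eig, one_smul]) (by rw [hlayer, one_smul])
  have hc : c ∈ stdSimplex ℝ (Fin T) :=
    ⟨fun t => Finset.sum_nonneg fun i _ => hw.1 (t, i), by rw [← hw.2, Fintype.sum_prod_type]⟩
  have hXc : effectiveMat Atil u v *ᵥ c = couplingMass Atil w • c := by
    funext t
    have := hcoupling t
    simp only [hwc, dotProduct_smul, smul_eq_mul] at this
    simp only [effectiveMat, mulVec, dotProduct, of_apply, Pi.smul_apply, smul_eq_mul] at this ⊢
    have hut : ∑ i, u t i * v t i ≠ 0 := (dotProduct_pos_of_pos (hu_pos t) (hv_pos t)).ne'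
    calc _ = (∑ t', Atil t t' * (c t' * ∑ i, u t i * v t' i)) / ∑ i, u t i * v t i := by
          rw [Finset.sum_div]
          exact Finset.sum_congr rfl fun t' _ => by ring
      _ = _ := by rw [this]; field_simp
  have hc0 : c ≠ 0 := fun h => by simpa [h] using hc.2
  have hr := eigenvalue_eq_of_nonneg_eigenvector hX hX_irr hα_pos hXα hc.1 hc0 hXc
  have hcα : c = α := by
    rw [eq_sum_smul_of_mulVec_eq_smul hX hX_irr hα_pos hα_sum hXα (y := c) (hr ▸ hXc), hc.2,
      one_smul]
  funext p
  simpa [hcα] using congrFun (hwc p.1) p.2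

theorem tendsto_supraMat_eigenvector [Nonempty (Fin T)] [Nonempty (Fin N)]
    (hC_pos : ∀ t i j, 0 < C t i j) (hC_col : ∀ t j, ∑ i, C t i j = 1)
    (hA : ∀ t t', 0 ≤ Atil t t')
    (hv_pos : ∀ t i, 0 < v t i) (hv_sum : ∀ t, ∑ i, v t i = 1) (hv_eig : ∀ t, C t *ᵥ v t = v t)
    (hu_pos : ∀ t i, 0 < u t i) (hu_eig : ∀ t, u t ᵥ* C t = u t)
    (hX_irr : IsIrreducibleMat (effectiveMat Atil u v))
    {r : ℝ} {α : Fin T → ℝ} (hα_pos : ∀ t, 0 < α t) (hα_sum : ∑ t, α t = 1)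
    (hXα : effectiveMat Atil u v *ᵥ α = r • α)
    {lam : ℝ → ℝ} {V : ℝ → Fin T × Fin N → ℝ}
    (hV : ∀ ω, 0 < ω → supraMat C Atil ω *ᵥ V ω = lam ω • V ω ∧ V ω ∈ stdSimplex ℝ _) :
    Tendsto V (nhdsWithin 0 (Set.Ioi 0)) (nhds fun p => α p.1 * v p.1 p.2) := by
  refine (isCompact_stdSimplex ℝ _).tendsto_nhds_of_unique_mapClusterPt
    (eventually_nhdsWithin_of_forall fun ω hω => (hV ω hω).2) fun w hw hwV => ?_
  have hmem : ∀ s, IsClosed s → (∀ ω, 0 < ω → (ω, V ω) ∈ s) → ((0 : ℝ), w) ∈ s :=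
    fun s hs h => hs.mem_of_mapClusterPt
      (hwV.prodMk_of_tendsto (tendsto_nhdsWithin_of_tendsto_nhds tendsto_id))
      (eventually_nhdsWithin_of_forall h)
  have hlam : ∀ ω, 0 < ω → lam ω = 1 + ω * couplingMass Atil (V ω) := fun ω hω =>
    eigenvalue_eq_one_add_couplingMass hC_col (hV ω hω).1 (hV ω hω).2.2
  refine eq_of_limit_equations hC_pos hA hv_pos hv_sum hv_eig hu_pos hX_irr hα_pos hα_sum hXα hw
    (fun t => ?_) (fun t => ?_)
  · have := hmem {p | C t *ᵥ Function.curry p.2 t + p.1 • ∑ t', Atil t t' • Function.curry p.2 t'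
        = (1 + p.1 * couplingMass Atil p.2) • Function.curry p.2 t}
      (isClosed_eq (by fun_prop) (by fun_prop)) fun ω hω => by
        rw [Set.mem_ofPred_eq, ← curry_supraMat_mulVec, (hV ω hω).1, ← hlam ω hω]
        rfl
    simpa using this
  · have := hmem {p | ∑ t', Atil t t' * (u t ⬝ᵥ Function.curry p.2 t') =
        couplingMass Atil p.2 * (u t ⬝ᵥ Function.curry p.2 t)}
      (isClosed_eq (by fun_prop) (by fun_prop)) fun ω hω => by
        have h := dotProduct_curry_supraMat_mulVec (Atil := Atil) (hu_eig t) ω (V ω)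
        rw [(hV ω hω).1, hlam ω hω] at h
        change u t ⬝ᵥ ((1 + ω * _) • Function.curry (V ω) t) = _ at h
        rw [dotProduct_smul, smul_eq_mul] at h
        exact mul_left_cancel₀ hω.ne' (by linear_combination -h)
    exact this

end WeakCoupling

theorem exists_supraMat_perron_family {N T : ℕ} [Nonempty (Fin T)] [Nonempty (Fin N)]
    {C : Fin T → Matrix (Fin N) (Fin N) ℝ} {Atil : Matrix (Fin T) (Fin T) ℝ}
    (hC_pos : ∀ t i j, 0 < C t i j) (hA : ∀ t t', 0 ≤ Atil t t') (hA_irr : IsIrreducibleMat Atil) :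
    ∃ (lam : ℝ → ℝ) (V : ℝ → Fin T × Fin N → ℝ), ∀ ω, 0 < ω →
      supraMat C Atil ω *ᵥ V ω = lam ω • V ω ∧
      (∀ z : ℂ, IsEigC (supraMat C Atil ω) z → ‖z‖ ≤ lam ω) ∧
      (∀ p, 0 < V ω p) ∧ ∑ p, V ω p = 1 := by
  have h : ∀ ω : ℝ, ∃ (l : ℝ) (w : Fin T × Fin N → ℝ), 0 < ω →
      supraMat C Atil ω *ᵥ w = l • w ∧ (∀ z : ℂ, IsEigC (supraMat C Atil ω) z → ‖z‖ ≤ l) ∧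
      (∀ p, 0 < w p) ∧ ∑ p, w p = 1 := fun ω => by
    by_cases hω : 0 < ω
    · obtain ⟨l, w, hw, hw1, hMw, hdom⟩ :=
        exists_perron_vector (supraMat_nonneg (fun t i j => (hC_pos t i j).le) hA hω.le)
          (isIrreducibleMat_supraMat hC_pos hA hA_irr hω)
      exact ⟨l, w, fun _ => ⟨hMw, hdom, hw, hw1⟩⟩
    · exact ⟨0, 0, fun h => absurd h hω⟩
  choose lam V hV using h
  exact ⟨lam, V, hV⟩

/-- **Weak-coupling limit.** Suppose every layer matrix `C^(t)` is column-stochastic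
with strictly positive entries (so its dominant eigenvalue is `1`, with PageRank vector
`v^(1,t)` and dominant left eigenvector `u^(1,t)`), and `Ã` is irreducible and
nonnegative. Then as `ω → 0⁺` the 1-norm-normalized dominant right eigenvector of
`C(ω)` converges to `∑_t α_t (e^(t) ⊗ v^(1,t))`, i.e. the vector with `(t,i)` entry
`α_t v^(1,t)_i`, where `α` is the 1-norm-normalized dominant eigenvector of the `T × T`
matrix `X_{tt'} = Ã_{tt'} ⟨u^(1,t), v^(1,t')⟩ / ⟨u^(1,t), v^(1,t)⟩`. -/
theorem weak_coupling_limit {N T : ℕ} (hN : 0 < N) (hT : 0 < T)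
    (C : Fin T → Matrix (Fin N) (Fin N) ℝ)
    (hC_pos : ∀ t i j, 0 < C t i j)
    (hC_col : ∀ t j, ∑ i, C t i j = 1)
    (Atil : Matrix (Fin T) (Fin T) ℝ) (hA : ∀ t t', 0 ≤ Atil t t')
    (hA_irr : IsIrreducibleMat Atil)
    (v : Fin T → Fin N → ℝ)
    (hv_pos : ∀ t i, 0 < v t i) (hv_sum : ∀ t, ∑ i, v t i = 1)
    (hv_eig : ∀ t, (C t).mulVec (v t) = v t)
    (u : Fin T → Fin N → ℝ)
    (hu_pos : ∀ t i, 0 < u t i)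
    (hu_eig : ∀ t, Matrix.vecMul (u t) (C t) = u t) :
    ∃ (α : Fin T → ℝ) (lam1 : ℝ) (lam : ℝ → ℝ) (V : ℝ → (Fin T × Fin N → ℝ)),
      (∀ t, 0 ≤ α t) ∧ (∑ t, α t = 1) ∧
      (Matrix.of fun t t' : Fin T =>
          Atil t t' * (∑ i, u t i * v t' i) / (∑ i, u t i * v t i)).mulVec α
        = lam1 • α ∧
      (∀ μ : ℂ, IsEigC (Matrix.of fun t t' : Fin T =>
          Atil t t' * (∑ i, u t i * v t' i) / (∑ i, u t i * v t i)) μ →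
        ‖μ‖ ≤ lam1) ∧
      (∀ ω : ℝ, 0 < ω →
        (supraMat C Atil ω).mulVec (V ω) = lam ω • V ω ∧
        (∀ z : ℂ, IsEigC (supraMat C Atil ω) z → ‖z‖ ≤ lam ω) ∧
        (∀ p, 0 < V ω p) ∧ (∑ p, V ω p = 1)) ∧
      Tendsto V (nhdsWithin 0 (Set.Ioi 0))
        (nhds fun p : Fin T × Fin N => α p.1 * v p.1 p.2) := by
  have : Nonempty (Fin T) := ⟨⟨0, hT⟩⟩
  have : Nonempty (Fin N) := ⟨⟨0, hN⟩⟩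
  have hX_irr := isIrreducibleMat_effectiveMat hA hA_irr hu_pos hv_pos
  obtain ⟨r, α, hα_pos, hα_sum, hXα, hX_dom⟩ :=
    exists_perron_vector (effectiveMat_nonneg hA hu_pos hv_pos) hX_irr
  obtain ⟨lam, V, hV⟩ := exists_supraMat_perron_family hC_pos hA hA_irr
  refine ⟨α, r, lam, V, fun t => (hα_pos t).le, hα_sum, hXα, hX_dom, hV, ?_⟩
  exact tendsto_supraMat_eigenvector hC_pos hC_col hA hv_pos hv_sum hv_eig hu_pos hu_eig hX_irr
    hα_pos hα_sum hXα fun ω hω => ⟨(hV ω hω).1, fun p => ((hV ω hω).2.2.1 p).le, (hV ω hω).2.2.2⟩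
end
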